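/- Let Ũ₁ := U₁ U_odd, where U₁ := Π_{j=2}^d Π_{x: x^{(j)} even, σ} e^{(iπ/2) n_{x,σ}} and U_odd is the particle-hole transformation on odd sites. With Γ_x^{(1)} := a†_{x,↑}a†_{x,↓} + a_{x,↓}a_{x,↑}, Γ_x^{(2)} := i(a†_{x,↑}a†_{x,↓} − a_{x,↓}a_{x,↑}), and H̄_int,j := (g/4)Σ_x[Γ_x^{(1)}+Γ_{x+e_j}^{(1)}]² − (g/4)Σ_x[Γ_x^{(2)}−Γ_{x+e_j}^{(2)}]², one has: (Ũ₁)† H̄_int,1 Ũ₁ = (g/4)Σ_{x∈Λ}[Γ_x^{(1)}−Γ_{x+e_1}^{(1)}]² − (g/4)Σ_{x∈Λ}[Γ_x^{(2)}−Γ_{x+e_1}^{(2)}]², and for each j = 2,…,d, (Ũ₁)† H̄_int,j Ũ₁ = (g/4)Σ_{x∈Λ}[Γ_x^{(1)}+Γ_{x+e_j}^{(1)}]² − (g/4)Σ_{x∈Λ}[Γ_x^{(2)}+Γ_{x+e_j}^{(2)}]². -/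

import Mathlib

/-!
On a single mode, conjugation by `Ũ₁` acts as `a_{x,σ} ↦ i^{m(x)} a_{x,σ}` on even sites and as
`a_{x,σ} ↦ i^{m(x)} a†_{x,σ}` on odd sites, where `m(x)` is the number of directions `j ≥ 2` with
`x⁽ʲ⁾` even. Indeed `U₁ = exp((iπ/2) N)` with `[N, a_{x,σ}] = -m(x) a_{x,σ}`, and each Klein factor
`u_{x,σ}` is a unitary whose conjugation exchanges `a_{x,σ}` and `a†_{x,σ}` and fixes every other
mode: its string of parities `1 - 2n` anticommutes exactly with the other modes, and its Majorana
factor `a†_{x,σ} + a_{x,σ}` anticommutes with them as well. Hence the pair operator `a†_{x,↑} a†_{x,↓}` is multiplied by `(-1)^{m(x)}` on even sites and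
sent to `-(-1)^{m(x)}` times its adjoint on odd sites, so that `Γ_x⁽²⁾` picks up the sign
`(-1)^{m(x)}` and `Γ_x⁽¹⁾` the sign `(-1)^{m(x) + x⁽¹⁾ + ⋯ + x⁽ᵈ⁾}`. A step along `e_1` flips the
parity of the coordinate sum but not that of `m`, a step along `e_j`, `j ≥ 2`, flips both. Since
conjugation is a ⋆-automorphism, the squares in `H̄_int,j` change their relative signs accordingly.
-/

open Complex Matrix
open scoped ComplexOrder

namespace PiFlux

/-- `2*L ≠ 0` when `L ≠ 0`, so that `ZMod (2*L)` is a finite type. -/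
instance instNeZero2L (L : ℕ) [NeZero L] : NeZero (2 * L) :=
  ⟨by have := NeZero.ne L; omega⟩

/-- A site of the periodic hypercubic lattice `Λ = {-L+1,…,L}^d` with periodic
boundary conditions: each coordinate is an element of `ZMod (2*L)`. -/
abbrev Site (L d : ℕ) := Fin d → ZMod (2 * L)

/-- The integer value in `{-L+1,…,L}` of a periodic coordinate. -/
def coordVal (L : ℕ) (z : ZMod (2 * L)) : ℤ := (z.val : ℤ) - (L : ℤ) + 1

/-- The coordinate sum `x⁽¹⁾ + ⋯ + x⁽ᵈ⁾` of a site. -/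
def coordSum (L d : ℕ) (x : Site L d) : ℤ := ∑ i, coordVal L (x i)

/-- `x + e_i`, with the periodic identification `L + 1 ≡ -L + 1`. -/
def shift (L d : ℕ) (i : Fin d) (x : Site L d) : Site L d :=
  Function.update x i (x i + 1)

/-- `θ_i(x) := x⁽¹⁾ + ⋯ + x⁽ⁱ⁻¹⁾`, plus `1` if `x⁽ⁱ⁾ = L`  (for the first
direction the sum is empty, so `θ_1(x)` is the indicator of `x⁽¹⁾ = L`). -/
def theta (L d : ℕ) (i : Fin d) (x : Site L d) : ℤ :=
  (∑ k ∈ Finset.univ.filter (fun k => k < i), coordVal L (x k))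
    + (if coordVal L (x i) = (L : ℤ) then 1 else 0)

/-- A classical U(1) gauge field: the real number `Ã_{x,x+e_i}` attached to the
positively oriented bond from `x` to `x + e_i`; the value on the reversed bond
is `Ã_{x+e_i,x} = -Ã_{x,x+e_i}`. -/
abbrev Gauge (L d : ℕ) := Site L d → Fin d → ℝ

/-- The canonical anticommutation relations for the fermion operators
`a x σ` (with `σ : Bool`; `true` = spin up, `false` = spin down). -/
def CAR {L d : ℕ} {F : Type*} [Fintype F] [DecidableEq F]
    (a : Site L d → Bool → Matrix F F ℂ) : Prop :=
  (∀ x y σ τ, a x σ * (a y τ)ᴴ + (a y τ)ᴴ * a x σ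
      = if x = y ∧ σ = τ then (1 : Matrix F F ℂ) else 0) ∧
  (∀ x y σ τ, a x σ * a y τ + a y τ * a x σ = 0)

variable {F : Type*} [Fintype F] [DecidableEq F]

/-- `Γ_x^{(1)} := a†_{x,↑} a†_{x,↓} + a_{x,↓} a_{x,↑}`. -/
noncomputable def Gamma1 (L d : ℕ) (a : Site L d → Bool → Matrix F F ℂ)
    (x : Site L d) : Matrix F F ℂ :=
  (a x true)ᴴ * (a x false)ᴴ + a x false * a x true

/-- `Γ_x^{(2)} := i (a†_{x,↑} a†_{x,↓} - a_{x,↓} a_{x,↑})`. -/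
noncomputable def Gamma2 (L d : ℕ) (a : Site L d → Bool → Matrix F F ℂ)
    (x : Site L d) : Matrix F F ℂ :=
  I • ((a x true)ᴴ * (a x false)ᴴ - a x false * a x true)

/-- `H̄_int,j := (g/4) Σ_x [Γ_x⁽¹⁾ + Γ_{x+e_j}⁽¹⁾]² - (g/4) Σ_x [Γ_x⁽²⁾ - Γ_{x+e_j}⁽²⁾]²`. -/
noncomputable def HbarIntJ (L d : ℕ) [NeZero L] (g : ℝ)
    (a : Site L d → Bool → Matrix F F ℂ) (j : Fin d) : Matrix F F ℂ :=
  ((g : ℂ) / 4) • ∑ x : Site L d, (Gamma1 L d a x + Gamma1 L d a (shift L d j x)) ^ 2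
    - ((g : ℂ) / 4) • ∑ x : Site L d, (Gamma2 L d a x - Gamma2 L d a (shift L d j x)) ^ 2

/-- The FILS operator `u_{x,σ} = [Π_{(y,σ') ≠ (x,σ)} (1 - 2 n_{y,σ'})] (a†_{x,σ} + a_{x,σ})`
(the factors `1 - 2 n_{y,σ'}` mutually commute, so the ordered product below
represents the product over all pairs `(y,σ') ≠ (x,σ)`). -/
noncomputable def klein (L d : ℕ) [NeZero L]
    (a : Site L d → Bool → Matrix F F ℂ) (x : Site L d) (σ : Bool) : Matrix F F ℂ :=
  (((Finset.univ : Finset (Site L d × Bool)).filter (fun p => p ≠ (x, σ))).toList.map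
      (fun p => (1 : Matrix F F ℂ) - (2 : ℂ) • ((a p.1 p.2)ᴴ * a p.1 p.2))).prod
    * ((a x σ)ᴴ + a x σ)

/-- `U_odd := Π_{σ} Π_{x ∈ Λ_odd} u_{x,σ}` (the factors mutually commute, so the
ordered product below represents the product over all `(x,σ)` with `x ∈ Λ_odd`). -/
noncomputable def Uodd (L d : ℕ) [NeZero L]
    (a : Site L d → Bool → Matrix F F ℂ) : Matrix F F ℂ :=
  (((Finset.univ : Finset (Site L d × Bool)).filter
      (fun p => Odd (coordSum L d p.1))).toList.map
      (fun p => klein L d a p.1 p.2)).prod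

/-- `U₁ := Π_{j=2}^d Π_{x : x⁽ʲ⁾ even} Π_σ e^{(iπ/2) n_{x,σ}}
   = exp[(iπ/2) Σ_{j≥2} Σ_{x : x⁽ʲ⁾ even} Σ_σ n_{x,σ}]`
(the number operators commute, so the product of exponentials equals the
exponential of the sum). -/
noncomputable def U1 (L d : ℕ) [NeZero L]
    (a : Site L d → Bool → Matrix F F ℂ) : Matrix F F ℂ :=
  NormedSpace.exp (((Real.pi : ℂ) / 2 * I) • ∑ σ : Bool,
    ∑ j ∈ Finset.univ.filter (fun j : Fin d => j.val ≠ 0),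
      ∑ x ∈ Finset.univ.filter (fun x : Site L d => Even (coordVal L (x j))),
        (a x σ)ᴴ * a x σ)

/-- `Ũ₁ := U₁ U_odd`. -/
noncomputable def Utilde1 (L d : ℕ) [NeZero L]
    (a : Site L d → Bool → Matrix F F ℂ) : Matrix F F ℂ :=
  U1 L d a * Uodd L d a

theorem _root_.IsSelfAdjoint.mem_unitary_of_mul_self {R : Type*} [Monoid R] [StarMul R] {u : R}
    (hu : IsSelfAdjoint u) (h : u * u = 1) : u ∈ unitary R :=
  Unitary.mem_iff.2 ⟨by rw [hu.star_eq, h], by rw [hu.star_eq, h]⟩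

theorem conj_list_prod_eq_ite_mem {ι : Type*} [DecidableEq ι] {T : Matrix F F ℂ → Matrix F F ℂ}
    (hT : ∀ V X, Vᴴ * T X * V = T (Vᴴ * X * V)) {f x : ι → Matrix F F ℂ}
    (hf : ∀ q p, (f q)ᴴ * x p * f q = if p = q then T (x p) else x p) :
    ∀ {ℓ : List ι}, ℓ.Nodup → ∀ p,
      ((ℓ.map f).prod)ᴴ * x p * (ℓ.map f).prod = if p ∈ ℓ then T (x p) else x p
  | [], _, p => by simp
  | q :: t, hℓ, p => by
    obtain ⟨hqt, ht⟩ := List.nodup_cons.mp hℓ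
    have ih := conj_list_prod_eq_ite_mem hT hf ht
    calc ((q :: t).map f).prodᴴ * x p * ((q :: t).map f).prod
        = ((t.map f).prod)ᴴ * ((f q)ᴴ * x p * f q) * (t.map f).prod := by
          simp only [List.map_cons, List.prod_cons, conjTranspose_mul, mul_assoc]
      _ = if p ∈ q :: t then T (x p) else x p := by
        rw [hf q p]
        by_cases hpq : p = q
        · subst hpq
          rw [if_pos rfl, hT, ih, if_neg hqt, if_pos List.mem_cons_self]
        · rw [if_neg hpq, ih]
          simp [hpq]

theorem exp_neg_mul_mul_exp_of_commutator_eq_smul {A B : Matrix F F ℂ} {z : ℂ}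
    (h : A * B - B * A = z • B) :
    NormedSpace.exp (-A) * B * NormedSpace.exp A = Complex.exp (-z) • B := by
  have hsemiconj : SemiconjBy B (A + algebraMap ℂ _ z) A := by
    rw [sub_eq_iff_eq_add] at h
    rw [SemiconjBy, mul_add, ← Algebra.commutes, ← Algebra.smul_def, h, add_comm]
  -- The operator norm is switched on only inside this proof, so that the statement keeps
  -- the default topology on matrices used in the definition of `U1`.
  have h1 : Complex.exp z • (NormedSpace.exp (-A) * B * NormedSpace.exp A) = B := by
    open scoped Matrix.Norms.Operator in
    have h1 := hsemiconj.exp_neg_mul_mul_exp_eq_self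
    open scoped Matrix.Norms.Operator in
    rwa [NormedSpace.exp_add_of_commute (Algebra.commutes z A).symm,
      ← NormedSpace.algebraMap_exp_comm, ← mul_assoc, ← Algebra.commutes, ← Algebra.smul_def,
      ← Complex.exp_eq_exp_ℂ] at h1
  conv_rhs => rw [← h1]
  rw [smul_smul, ← Complex.exp_add, neg_add_cancel, Complex.exp_zero, one_smul]

theorem exp_mem_unitary_of_conjTranspose_eq_neg {A : Matrix F F ℂ} (hA : Aᴴ = -A) :
    NormedSpace.exp A ∈ unitary (Matrix F F ℂ) := by
  rw [Unitary.mem_iff, star_eq_conjTranspose, ← Matrix.exp_conjTranspose, hA,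
    ← Matrix.exp_add_of_commute _ _ (Commute.refl A).neg_left,
    ← Matrix.exp_add_of_commute _ _ (Commute.refl A).neg_right, neg_add_cancel, add_neg_cancel,
    NormedSpace.exp_zero, and_self]

structure IsCAR {ι : Type*} (c : ι → Matrix F F ℂ) : Prop where
  mul_conjTranspose_add_conjTranspose_mul_self : ∀ p, c p * (c p)ᴴ + (c p)ᴴ * c p = 1
  mul_conjTranspose_add_conjTranspose_mul : ∀ p q, p ≠ q → c p * (c q)ᴴ + (c q)ᴴ * c p = 0
  mul_add_mul : ∀ p q, c p * c q + c q * c p = 0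

theorem CAR.isCAR {L d : ℕ} {a : Site L d → Bool → Matrix F F ℂ} (h : CAR a) :
    IsCAR (fun p : Site L d × Bool => a p.1 p.2) where
  mul_conjTranspose_add_conjTranspose_mul_self p := by simpa using h.1 p.1 p.1 p.2 p.2
  mul_conjTranspose_add_conjTranspose_mul p q hpq := by
    simpa [← Prod.ext_iff, hpq] using h.1 p.1 q.1 p.2 q.2
  mul_add_mul p q := h.2 p.1 q.1 p.2 q.2

/-- The parity `(-1)^{n_p} = 1 - 2 n_p` of the occupation number of mode `p`. -/
noncomputable def parityOp {ι : Type*} (c : ι → Matrix F F ℂ) (p : ι) : Matrix F F ℂ :=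
  1 - (2 : ℂ) • ((c p)ᴴ * c p)

noncomputable def majoranaOp {ι : Type*} (c : ι → Matrix F F ℂ) (p : ι) : Matrix F F ℂ :=
  (c p)ᴴ + c p

theorem conjTranspose_parityOp {ι : Type*} (c : ι → Matrix F F ℂ) (p : ι) :
    (parityOp c p)ᴴ = parityOp c p := by
  simp [parityOp, conjTranspose_mul]

omit [Fintype F] [DecidableEq F] in
theorem conjTranspose_majoranaOp {ι : Type*} (c : ι → Matrix F F ℂ) (p : ι) :
    (majoranaOp c p)ᴴ = majoranaOp c p := by
  simp [majoranaOp, add_comm]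

noncomputable def kleinOp {ι : Type*} [Fintype ι] [DecidableEq ι] (c : ι → Matrix F F ℂ)
    (q : ι) : Matrix F F ℂ :=
  (((Finset.univ : Finset ι).filter (· ≠ q)).toList.map (parityOp c)).prod * majoranaOp c q

namespace IsCAR

variable {ι : Type*} {c : ι → Matrix F F ℂ} (hc : IsCAR c)
include hc

theorem mul_self_eq_zero (p : ι) : c p * c p = 0 := by
  have h := hc.mul_add_mul p p
  rw [← two_smul ℂ] at h
  exact (smul_eq_zero.mp h).resolve_left two_ne_zero

theorem conjTranspose_mul_conjTranspose_self_eq_zero (p : ι) : (c p)ᴴ * (c p)ᴴ = 0 := by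
  rw [← conjTranspose_mul, hc.mul_self_eq_zero, conjTranspose_zero]

theorem mul_eq_neg_mul (p q : ι) : c p * c q = -(c q * c p) :=
  eq_neg_of_add_eq_zero_left (hc.mul_add_mul p q)

theorem mul_conjTranspose_eq_neg {p q : ι} (hpq : p ≠ q) : c p * (c q)ᴴ = -((c q)ᴴ * c p) :=
  eq_neg_of_add_eq_zero_left (hc.mul_conjTranspose_add_conjTranspose_mul p q hpq)

theorem mul_conjTranspose_self (p : ι) : c p * (c p)ᴴ = 1 - (c p)ᴴ * c p :=
  eq_sub_of_add_eq (hc.mul_conjTranspose_add_conjTranspose_mul_self p)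

theorem conjTranspose_mul_self_mul_self (p : ι) : (c p)ᴴ * c p * c p = 0 := by
  rw [mul_assoc, hc.mul_self_eq_zero, mul_zero]

theorem mul_conjTranspose_mul_self (p : ι) : c p * ((c p)ᴴ * c p) = c p := by
  rw [← mul_assoc, hc.mul_conjTranspose_self, sub_mul, one_mul, hc.conjTranspose_mul_self_mul_self,
    sub_zero]

theorem commute_conjTranspose_mul_self {p q : ι} (hpq : p ≠ q) :
    Commute ((c p)ᴴ * c p) (c q) := by
  rw [Commute, SemiconjBy, mul_assoc, hc.mul_eq_neg_mul p q, mul_neg, ← mul_assoc, ← neg_mul,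
    ← hc.mul_conjTranspose_eq_neg hpq.symm, mul_assoc]

theorem parityOp_mul_self (p : ι) : parityOp c p * c p = c p := by
  rw [parityOp, sub_mul, one_mul, smul_mul_assoc, hc.conjTranspose_mul_self_mul_self, smul_zero,
    sub_zero]

theorem mul_parityOp_self (p : ι) : c p * parityOp c p = -c p := by
  rw [parityOp, mul_sub, mul_one, mul_smul_comm, hc.mul_conjTranspose_mul_self]
  module

theorem commute_parityOp {p q : ι} (hpq : p ≠ q) : Commute (parityOp c p) (c q) :=
  (Commute.one_left _).sub_left ((hc.commute_conjTranspose_mul_self hpq).smul_left _)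

theorem parityOp_mul_parityOp (p : ι) : parityOp c p * parityOp c p = 1 := by
  have hn : (c p)ᴴ * c p * ((c p)ᴴ * c p) = (c p)ᴴ * c p := by
    rw [mul_assoc, hc.mul_conjTranspose_mul_self]
  simp only [parityOp, sub_mul, mul_sub, one_mul, mul_one, smul_mul_assoc, mul_smul_comm, hn]
  module

theorem majoranaOp_mul_majoranaOp (p : ι) : majoranaOp c p * majoranaOp c p = 1 := by
  rw [majoranaOp, add_mul, mul_add, mul_add, hc.mul_self_eq_zero,
    hc.conjTranspose_mul_conjTranspose_self_eq_zero, add_zero, zero_add, add_comm,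
    hc.mul_conjTranspose_add_conjTranspose_mul_self]

theorem majoranaOp_mul_eq_neg {p q : ι} (hpq : p ≠ q) :
    majoranaOp c q * c p = -(c p * majoranaOp c q) := by
  rw [majoranaOp, add_mul, mul_add, neg_add, hc.mul_eq_neg_mul q p,
    hc.mul_conjTranspose_eq_neg hpq, neg_neg]

theorem majoranaOp_mul_self_mul_majoranaOp (p : ι) :
    majoranaOp c p * c p * majoranaOp c p = (c p)ᴴ := by
  rw [majoranaOp, add_mul, hc.mul_self_eq_zero, add_zero, mul_add, mul_assoc,
    hc.mul_conjTranspose_self, mul_assoc, hc.mul_self_eq_zero, mul_zero, add_zero, mul_sub, mul_one,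
    ← mul_assoc, hc.conjTranspose_mul_conjTranspose_self_eq_zero, zero_mul, sub_zero]

variable [DecidableEq ι]

theorem commutator_conjTranspose_mul_self (p q : ι) :
    (c p)ᴴ * c p * c q - c q * ((c p)ᴴ * c p) = if p = q then -c q else 0 := by
  split_ifs with hpq
  · subst hpq
    rw [hc.conjTranspose_mul_self_mul_self, hc.mul_conjTranspose_mul_self, zero_sub]
  · rw [(hc.commute_conjTranspose_mul_self hpq).eq, sub_self]

theorem parityOp_conj (q p : ι) :
    (parityOp c q)ᴴ * c p * parityOp c q = if p = q then -c p else c p := by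
  rw [conjTranspose_parityOp]
  by_cases hpq : p = q
  · subst hpq
    rw [if_pos rfl, hc.parityOp_mul_self, hc.mul_parityOp_self]
  · rw [if_neg hpq, (hc.commute_parityOp (Ne.symm hpq)).eq, mul_assoc,
      hc.parityOp_mul_parityOp, mul_one]

variable [Fintype ι]

theorem kleinOp_conj (q p : ι) :
    (kleinOp c q)ᴴ * c p * kleinOp c q = if p = q then (c p)ᴴ else c p := by
  set S := (((Finset.univ : Finset ι).filter (· ≠ q)).toList.map (parityOp c)).prod
  have hS : Sᴴ * c p * S = if p ≠ q then -c p else c p := by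
    simpa using conj_list_prod_eq_ite_mem (T := Neg.neg) (by simp [mul_neg, neg_mul])
      hc.parityOp_conj (Finset.nodup_toList ((Finset.univ : Finset ι).filter (· ≠ q))) p
  calc (kleinOp c q)ᴴ * c p * kleinOp c q
      = majoranaOp c q * (Sᴴ * c p * S) * majoranaOp c q := by
        simp only [kleinOp, conjTranspose_mul, conjTranspose_majoranaOp, mul_assoc, S]
    _ = if p = q then (c p)ᴴ else c p := by
        rw [hS]
        by_cases hpq : p = q
        · subst hpq
          simp [hc.majoranaOp_mul_self_mul_majoranaOp]
        · rw [if_pos hpq, if_neg hpq, mul_neg, neg_mul, hc.majoranaOp_mul_eq_neg hpq, neg_mul,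
            neg_neg, mul_assoc, hc.majoranaOp_mul_majoranaOp, mul_one]

theorem kleinOp_mem_unitary (q : ι) : kleinOp c q ∈ unitary (Matrix F F ℂ) := by
  refine Submonoid.mul_mem _ (Submonoid.list_prod_mem _ ?_) ?_
  · simp only [List.mem_map]
    rintro _ ⟨p, -, rfl⟩
    exact IsSelfAdjoint.mem_unitary_of_mul_self (conjTranspose_parityOp c p)
      (hc.parityOp_mul_parityOp p)
  · exact IsSelfAdjoint.mem_unitary_of_mul_self (conjTranspose_majoranaOp c q)
      (hc.majoranaOp_mul_majoranaOp q)

end IsCAR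

def evenTransverseCount (L d : ℕ) (x : Site L d) : ℕ :=
  (Finset.univ.filter (fun j : Fin d => j.val ≠ 0 ∧ Even (coordVal L (x j)))).card

section Lattice
variable {L d : ℕ}

theorem even_coordVal_add_one [NeZero L] (z : ZMod (2 * L)) :
    Even (coordVal L (z + 1)) ↔ ¬Even (coordVal L z) := by
  have hL : 1 ≤ L := Nat.one_le_iff_ne_zero.mpr (NeZero.ne L)
  have : Fact (1 < 2 * L) := ⟨by omega⟩
  have hz : z.val < 2 * L := ZMod.val_lt z
  have hv : (z + 1).val = (z.val + 1) % (2 * L) := by rw [ZMod.val_add, ZMod.val_one]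
  simp only [coordVal, Int.even_iff]
  -- `z.val + 1` either stays below `2L` or wraps around to `0`; both change the parity
  rcases Nat.lt_or_ge (z.val + 1) (2 * L) with hlt | hge
  · rw [hv, Nat.mod_eq_of_lt hlt]; omega
  · rw [hv, show z.val + 1 = 2 * L by omega, Nat.mod_self]; omega

theorem shift_apply_of_ne (j : Fin d) (x : Site L d) {k : Fin d} (hk : k ≠ j) :
    shift L d j x k = x k :=
  Function.update_of_ne hk _ _

theorem sum_shift_add {M : Type*} [AddCommMonoid M] (g : Fin d → ZMod (2 * L) → M)
    (j : Fin d) (x : Site L d) :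
    ∑ k, g k (shift L d j x k) + g j (x j) = ∑ k, g k (x k) + g j (x j + 1) := by
  have hrest : ∑ k ∈ {j}ᶜ, g k (shift L d j x k) = ∑ k ∈ {j}ᶜ, g k (x k) :=
    Finset.sum_congr rfl fun k hk => by rw [shift_apply_of_ne j x (by simpa using hk)]
  rw [Fintype.sum_eq_add_sum_compl j, Fintype.sum_eq_add_sum_compl j (fun k => g k (x k)), hrest,
    shift, Function.update_self]
  abel

theorem odd_coordSum_shift [NeZero L] (j : Fin d) (x : Site L d) :
    Odd (coordSum L d (shift L d j x)) ↔ ¬Odd (coordSum L d x) := by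
  have hsum := sum_shift_add (fun _ z => coordVal L z) j x
  have hpar := even_coordVal_add_one (x j)
  simp only [coordSum, Int.odd_iff, Int.even_iff] at hsum hpar ⊢
  omega

theorem evenTransverseCount_shift_add [NeZero L] (j : Fin d) (x : Site L d) :
    evenTransverseCount L d (shift L d j x)
        + (if j.val ≠ 0 ∧ Even (coordVal L (x j)) then 1 else 0)
      = evenTransverseCount L d x + (if j.val ≠ 0 ∧ Even (coordVal L (x j + 1)) then 1 else 0) := by
  simpa only [evenTransverseCount, Finset.card_filter] using
    sum_shift_add (fun k z => if k.val ≠ 0 ∧ Even (coordVal L z) then 1 else 0) j x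

theorem evenTransverseCount_shift_of_val_eq_zero [NeZero L] {j : Fin d} (hj : j.val = 0)
    (x : Site L d) : evenTransverseCount L d (shift L d j x) = evenTransverseCount L d x := by
  simpa [hj] using evenTransverseCount_shift_add j x

theorem even_evenTransverseCount_shift_of_val_ne_zero [NeZero L] {j : Fin d} (hj : j.val ≠ 0)
    (x : Site L d) :
    Even (evenTransverseCount L d (shift L d j x)) ↔ ¬Even (evenTransverseCount L d x) := by
  have hsum := evenTransverseCount_shift_add j x
  rw [Nat.even_iff, Nat.even_iff]
  by_cases he : Even (coordVal L (x j)) <;>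
    simp [hj, he, even_coordVal_add_one] at hsum <;> omega

end Lattice

noncomputable def transverseEvenNumber (L d : ℕ) [NeZero L] (a : Site L d → Bool → Matrix F F ℂ) :
    Matrix F F ℂ :=
  ∑ σ : Bool, ∑ j ∈ Finset.univ.filter (fun j : Fin d => j.val ≠ 0),
    ∑ x ∈ Finset.univ.filter (fun x : Site L d => Even (coordVal L (x j))), (a x σ)ᴴ * a x σ

section Conjugation
variable {L d : ℕ} [NeZero L] {a : Site L d → Bool → Matrix F F ℂ}

theorem U1_eq_exp :
    U1 L d a = NormedSpace.exp (((Real.pi : ℂ) / 2 * I) • transverseEvenNumber L d a) := rfl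

theorem commutator_transverseEvenNumber (h : CAR a) (y : Site L d) (τ : Bool) :
    transverseEvenNumber L d a * a y τ - a y τ * transverseEvenNumber L d a
      = -(evenTransverseCount L d y : ℂ) • a y τ := by
  have hcomm := h.isCAR.commutator_conjTranspose_mul_self
  simp only [Prod.forall, Prod.mk.injEq] at hcomm
  simp only [transverseEvenNumber, Finset.sum_mul, Finset.mul_sum, ← Finset.sum_sub_distrib,
    hcomm, and_comm (a := _ = y), ite_and, Finset.sum_ite_irrel, Finset.sum_const_zero,
    Finset.sum_ite_eq', Finset.mem_univ, if_true, Finset.mem_filter, true_and]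
  rw [← Finset.sum_filter, Finset.sum_const, Finset.filter_filter, evenTransverseCount,
    neg_smul, Nat.cast_smul_eq_nsmul, smul_neg]

omit [DecidableEq F] in
theorem conjTranspose_transverseEvenNumber :
    (transverseEvenNumber L d a)ᴴ = transverseEvenNumber L d a := by
  simp [transverseEvenNumber, conjTranspose_sum, conjTranspose_mul]

omit [DecidableEq F] in
theorem conjTranspose_U1_exponent :
    (((Real.pi : ℂ) / 2 * I) • transverseEvenNumber L d a)ᴴ
      = -(((Real.pi : ℂ) / 2 * I) • transverseEvenNumber L d a) := by
  rw [conjTranspose_smul, conjTranspose_transverseEvenNumber, ← neg_smul]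
  congr 1
  simp

theorem U1_mem_unitary : U1 L d a ∈ unitary (Matrix F F ℂ) :=
  exp_mem_unitary_of_conjTranspose_eq_neg conjTranspose_U1_exponent

theorem U1_conj (h : CAR a) (y : Site L d) (τ : Bool) :
    (U1 L d a)ᴴ * a y τ * U1 L d a = I ^ evenTransverseCount L d y • a y τ := by
  rw [U1_eq_exp, ← Matrix.exp_conjTranspose, conjTranspose_U1_exponent,
    exp_neg_mul_mul_exp_of_commutator_eq_smul
      (z := -((Real.pi : ℂ) / 2 * I * evenTransverseCount L d y))]
  · rw [neg_neg, mul_comm, Complex.exp_nat_mul, Complex.exp_pi_div_two_mul_I]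
  · rw [smul_mul_assoc, mul_smul_comm, ← smul_sub, commutator_transverseEvenNumber h, smul_smul,
      mul_neg]

theorem Uodd_eq_list_prod :
    Uodd L d a = (((Finset.univ : Finset (Site L d × Bool)).filter
      (fun p => Odd (coordSum L d p.1))).toList.map (kleinOp (fun p => a p.1 p.2))).prod := rfl

theorem Uodd_mem_unitary (h : CAR a) : Uodd L d a ∈ unitary (Matrix F F ℂ) := by
  rw [Uodd_eq_list_prod]
  refine Submonoid.list_prod_mem _ fun u hu => ?_
  obtain ⟨p, -, rfl⟩ := List.mem_map.mp hu
  exact h.isCAR.kleinOp_mem_unitary p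

theorem Uodd_conj (h : CAR a) (y : Site L d) (τ : Bool) :
    (Uodd L d a)ᴴ * a y τ * Uodd L d a
      = if Odd (coordSum L d y) then (a y τ)ᴴ else a y τ := by
  rw [Uodd_eq_list_prod]
  simpa using conj_list_prod_eq_ite_mem (T := conjTranspose)
    (by simp [conjTranspose_mul, mul_assoc]) h.isCAR.kleinOp_conj
    (Finset.nodup_toList ((Finset.univ : Finset (Site L d × Bool)).filter
      (fun p => Odd (coordSum L d p.1)))) (y, τ)

theorem Utilde1_mem_unitary (h : CAR a) : Utilde1 L d a ∈ unitary (Matrix F F ℂ) :=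
  Submonoid.mul_mem _ U1_mem_unitary (Uodd_mem_unitary h)

theorem Utilde1_conj (h : CAR a) (y : Site L d) (τ : Bool) :
    (Utilde1 L d a)ᴴ * a y τ * Utilde1 L d a
      = I ^ evenTransverseCount L d y • if Odd (coordSum L d y) then (a y τ)ᴴ else a y τ := by
  calc (Utilde1 L d a)ᴴ * a y τ * Utilde1 L d a
      = (Uodd L d a)ᴴ * ((U1 L d a)ᴴ * a y τ * U1 L d a) * Uodd L d a := by
        simp only [Utilde1, conjTranspose_mul, mul_assoc]
    _ = _ := by rw [U1_conj h, mul_smul_comm, smul_mul_assoc, Uodd_conj h]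

end Conjugation

noncomputable def gamma2Sign (L d : ℕ) (x : Site L d) : ℂ := (-1) ^ evenTransverseCount L d x

noncomputable def gamma1Sign (L d : ℕ) (x : Site L d) : ℂ :=
  (if Odd (coordSum L d x) then -1 else 1) * gamma2Sign L d x

omit [DecidableEq F] in
theorem Gamma1_eq_add_conjTranspose {L d : ℕ} (a : Site L d → Bool → Matrix F F ℂ)
    (x : Site L d) :
    Gamma1 L d a x = (a x true)ᴴ * (a x false)ᴴ + ((a x true)ᴴ * (a x false)ᴴ)ᴴ := by
  simp [Gamma1, conjTranspose_mul]

omit [DecidableEq F] in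
theorem Gamma2_eq_smul_sub_conjTranspose {L d : ℕ} (a : Site L d → Bool → Matrix F F ℂ)
    (x : Site L d) :
    Gamma2 L d a x = I • ((a x true)ᴴ * (a x false)ᴴ - ((a x true)ᴴ * (a x false)ᴴ)ᴴ) := by
  simp [Gamma2, conjTranspose_mul]

section Signs
variable {L d : ℕ}

theorem gamma2Sign_mul_self (x : Site L d) : gamma2Sign L d x * gamma2Sign L d x = 1 := by
  rw [gamma2Sign, ← mul_pow]; norm_num

theorem gamma1Sign_mul_self (x : Site L d) : gamma1Sign L d x * gamma1Sign L d x = 1 := by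
  rw [gamma1Sign, mul_mul_mul_comm, gamma2Sign_mul_self]
  split_ifs <;> norm_num

theorem star_gamma2Sign (x : Site L d) : star (gamma2Sign L d x) = gamma2Sign L d x := by
  simp [gamma2Sign]

theorem gamma2Sign_shift [NeZero L] (j : Fin d) (x : Site L d) :
    gamma2Sign L d (shift L d j x) = (if j.val = 0 then 1 else -1) * gamma2Sign L d x := by
  split_ifs with hj
  · rw [gamma2Sign, gamma2Sign, evenTransverseCount_shift_of_val_eq_zero hj, one_mul]
  · rw [gamma2Sign, gamma2Sign, neg_one_pow_congr ((even_evenTransverseCount_shift_of_val_ne_zero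
      hj x).trans Nat.even_add_one.symm), pow_succ, mul_neg_one, neg_one_mul]

theorem gamma1Sign_shift [NeZero L] (j : Fin d) (x : Site L d) :
    gamma1Sign L d (shift L d j x) = (if j.val = 0 then -1 else 1) * gamma1Sign L d x := by
  have hpar := odd_coordSum_shift j x
  rw [gamma1Sign, gamma1Sign, gamma2Sign_shift]
  by_cases hodd : Odd (coordSum L d x) <;> split_ifs <;> simp_all

end Signs

section Gamma
variable {L d : ℕ} [NeZero L] {a : Site L d → Bool → Matrix F F ℂ}

noncomputable def utilde1Conj (h : CAR a) : Matrix F F ℂ ≃⋆ₐ[ℂ] Matrix F F ℂ :=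
  Unitary.conjStarAlgAut ℂ _ (star ⟨Utilde1 L d a, Utilde1_mem_unitary h⟩)

theorem utilde1Conj_apply (h : CAR a) (X : Matrix F F ℂ) :
    utilde1Conj h X = (Utilde1 L d a)ᴴ * X * Utilde1 L d a :=
  Unitary.conjStarAlgAut_star_apply _ _

theorem utilde1Conj_conjTranspose (h : CAR a) (X : Matrix F F ℂ) :
    utilde1Conj h Xᴴ = (utilde1Conj h X)ᴴ :=
  map_star _ X

theorem utilde1Conj_pair (h : CAR a) (x : Site L d) :
    utilde1Conj h ((a x true)ᴴ * (a x false)ᴴ)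
      = gamma2Sign L d x • if Odd (coordSum L d x) then -((a x true)ᴴ * (a x false)ᴴ)ᴴ
          else (a x true)ᴴ * (a x false)ᴴ := by
  have hadj : ∀ τ, utilde1Conj h (a x τ)ᴴ = star (I ^ evenTransverseCount L d x) •
      if Odd (coordSum L d x) then a x τ else (a x τ)ᴴ := by
    intro τ
    rw [utilde1Conj_conjTranspose, utilde1Conj_apply, Utilde1_conj h, conjTranspose_smul]
    split_ifs <;> simp
  have hsign : star (I ^ evenTransverseCount L d x) * star (I ^ evenTransverseCount L d x)
      = gamma2Sign L d x := by
    rw [← star_mul', ← mul_pow, I_mul_I, ← gamma2Sign, star_gamma2Sign]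
  rw [map_mul, hadj, hadj, smul_mul_smul_comm, hsign]
  split_ifs
  · rw [conjTranspose_mul, conjTranspose_conjTranspose, conjTranspose_conjTranspose]
    exact congrArg _ (h.isCAR.mul_eq_neg_mul (x, true) (x, false))
  · rfl

theorem utilde1Conj_Gamma1 (h : CAR a) (x : Site L d) :
    utilde1Conj h (Gamma1 L d a x) = gamma1Sign L d x • Gamma1 L d a x := by
  rw [Gamma1_eq_add_conjTranspose, map_add, utilde1Conj_conjTranspose, utilde1Conj_pair,
    conjTranspose_smul, star_gamma2Sign, gamma1Sign, ← smul_smul, ← smul_add]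
  split_ifs <;> simp [add_comm]

theorem utilde1Conj_Gamma2 (h : CAR a) (x : Site L d) :
    utilde1Conj h (Gamma2 L d a x) = gamma2Sign L d x • Gamma2 L d a x := by
  rw [Gamma2_eq_smul_sub_conjTranspose, map_smul, map_sub, utilde1Conj_conjTranspose,
    utilde1Conj_pair, conjTranspose_smul, star_gamma2Sign, smul_comm, ← smul_sub]
  split_ifs <;> simp [smul_sub, neg_add_eq_sub]

end Gamma

theorem map_HbarIntJ {G : Type*} [FunLike G (Matrix F F ℂ) (Matrix F F ℂ)]
    [AlgHomClass G ℂ (Matrix F F ℂ) (Matrix F F ℂ)] (φ : G) {L d : ℕ} [NeZero L] (g : ℝ)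
    {a : Site L d → Bool → Matrix F F ℂ} (j : Fin d) {ε₁ ε₂ : Site L d → ℂ} {t₁ t₂ : ℂ}
    (hΓ₁ : ∀ x, φ (Gamma1 L d a x) = ε₁ x • Gamma1 L d a x)
    (hΓ₂ : ∀ x, φ (Gamma2 L d a x) = ε₂ x • Gamma2 L d a x)
    (hε₁ : ∀ x, ε₁ (shift L d j x) = t₁ * ε₁ x) (hε₂ : ∀ x, ε₂ (shift L d j x) = t₂ * ε₂ x)
    (hsq₁ : ∀ x, ε₁ x * ε₁ x = 1) (hsq₂ : ∀ x, ε₂ x * ε₂ x = 1) :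
    φ (HbarIntJ L d g a j)
      = ((g : ℂ) / 4) • ∑ x, (Gamma1 L d a x + t₁ • Gamma1 L d a (shift L d j x)) ^ 2
        - ((g : ℂ) / 4) • ∑ x, (Gamma2 L d a x - t₂ • Gamma2 L d a (shift L d j x)) ^ 2 := by
  have h₁ : ∀ x (A B : Matrix F F ℂ), (ε₁ x • A + (t₁ * ε₁ x) • B) ^ 2 = (A + t₁ • B) ^ 2 :=
    fun x A B => by
      rw [mul_comm, ← smul_smul, ← smul_add, smul_pow, sq, hsq₁, one_smul]
  have h₂ : ∀ x (A B : Matrix F F ℂ), (ε₂ x • A - (t₂ * ε₂ x) • B) ^ 2 = (A - t₂ • B) ^ 2 :=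
    fun x A B => by
      rw [mul_comm, ← smul_smul, ← smul_sub, smul_pow, sq, hsq₂, one_smul]
  simp only [HbarIntJ, map_sub, map_smul, map_sum, map_pow, map_add, hΓ₁, hΓ₂, hε₁, hε₂, h₁, h₂]

theorem utilde1_interaction_conjugation_general (L d : ℕ) [NeZero L] [NeZero d]
    {F : Type*} [Fintype F] [DecidableEq F]
    (a : Site L d → Bool → Matrix F F ℂ) (hCAR : CAR a)
    (g : ℝ) :
    ((Utilde1 L d a)ᴴ * HbarIntJ L d g a 0 * Utilde1 L d a
      = ((g : ℂ) / 4) •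
          ∑ x : Site L d, (Gamma1 L d a x - Gamma1 L d a (shift L d 0 x)) ^ 2
        - ((g : ℂ) / 4) •
          ∑ x : Site L d, (Gamma2 L d a x - Gamma2 L d a (shift L d 0 x)) ^ 2) ∧
    (∀ j : Fin d, j.val ≠ 0 →
      (Utilde1 L d a)ᴴ * HbarIntJ L d g a j * Utilde1 L d a
        = ((g : ℂ) / 4) •
            ∑ x : Site L d, (Gamma1 L d a x + Gamma1 L d a (shift L d j x)) ^ 2
          - ((g : ℂ) / 4) •
            ∑ x : Site L d, (Gamma2 L d a x + Gamma2 L d a (shift L d j x)) ^ 2) := by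
  have hconj : ∀ j, (Utilde1 L d a)ᴴ * HbarIntJ L d g a j * Utilde1 L d a
      = ((g : ℂ) / 4) • ∑ x, (Gamma1 L d a x
          + (if j.val = 0 then (-1 : ℂ) else 1) • Gamma1 L d a (shift L d j x)) ^ 2
        - ((g : ℂ) / 4) • ∑ x, (Gamma2 L d a x
          - (if j.val = 0 then (1 : ℂ) else -1) • Gamma2 L d a (shift L d j x)) ^ 2 := fun j => by
    rw [← utilde1Conj_apply hCAR]
    exact map_HbarIntJ (utilde1Conj hCAR) g j (utilde1Conj_Gamma1 hCAR) (utilde1Conj_Gamma2 hCAR)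
      (gamma1Sign_shift j) (gamma2Sign_shift j) gamma1Sign_mul_self gamma2Sign_mul_self
  refine ⟨?_, fun j hj => ?_⟩
  · simp [hconj, sub_eq_add_neg]
  · simp [hconj, hj, sub_eq_add_neg]

/-- Conjugation by `Ũ₁ = U₁ U_odd` flips the relative signs in
the quadratic forms of `H̄_int,j`: for `j = 1` (the first direction, index `0`)
both squares become differences, and for `j = 2,…,d` both become sums. -/
theorem utilde1_interaction_conjugation (L d : ℕ) [NeZero L] [NeZero d] (hd : 3 ≤ d)
    {F : Type*} [Fintype F] [DecidableEq F]
    (a : Site L d → Bool → Matrix F F ℂ) (hCAR : CAR a)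
    (hcard : Fintype.card F = 2 ^ (2 * Fintype.card (Site L d)))
    (g : ℝ) (hg : 0 ≤ g) :
    ((Utilde1 L d a)ᴴ * HbarIntJ L d g a 0 * Utilde1 L d a
      = ((g : ℂ) / 4) •
          ∑ x : Site L d, (Gamma1 L d a x - Gamma1 L d a (shift L d 0 x)) ^ 2
        - ((g : ℂ) / 4) •
          ∑ x : Site L d, (Gamma2 L d a x - Gamma2 L d a (shift L d 0 x)) ^ 2) ∧
    (∀ j : Fin d, j.val ≠ 0 →
      (Utilde1 L d a)ᴴ * HbarIntJ L d g a j * Utilde1 L d a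
        = ((g : ℂ) / 4) •
            ∑ x : Site L d, (Gamma1 L d a x + Gamma1 L d a (shift L d j x)) ^ 2
          - ((g : ℂ) / 4) •
            ∑ x : Site L d, (Gamma2 L d a x + Gamma2 L d a (shift L d j x)) ^ 2) :=
  utilde1_interaction_conjugation_general L d a hCAR g

end PiFlux
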